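/- Duality of session types is an involution: for every session type S, the dual of the dual of S equals S. -/
import Mathlib


/-- Session types with de Bruijn recursion variables: `var n` is `t`,
    `dvar n` is the dualised variable `t̄`, over value types `A`. -/
inductive Session (A : Type) : Type
  | out  (a : A) (s : Session A)   -- !A.S
  | inp  (a : A) (s : Session A)   -- ?A.S
  | mu   (s : Session A)           -- μt.S
  | var  (n : ℕ)                   -- t
  | dvar (n : ℕ)                   -- t̄
  | done                           -- End

namespace Session

/-- `flip n S` is the substitution `S{t̄/t}` for the variable with index `n`
    (swapping `var n` and `dvar n`), adjusting the index under `μ`. -/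
def flip {A : Type} (n : ℕ) : Session A → Session A
  | .out a s  => .out a (flip n s)
  | .inp a s  => .inp a (flip n s)
  | .mu s     => .mu (flip (n + 1) s)
  | .var m    => if m = n then .dvar m else .var m
  | .dvar m   => if m = n then .var m else .dvar m
  | .done     => .done

/-- Duality: dual(!A.S) = ?A.dual(S); dual(?A.S) = !A.dual(S);
    dual(μt.S) = μt.dual(S{t̄/t}); dual(t) = t̄; dual(t̄) = t; dual(End) = End. -/
def size {A : Type} : Session A → ℕ
  | .out _ s  => size s + 1
  | .inp _ s  => size s + 1
  | .mu s     => size s + 1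
  | _         => 0

theorem size_flip {A : Type} (n : ℕ) (s : Session A) : (flip n s).size = s.size := by
  induction s generalizing n <;> simp [flip, size, *] <;> split <;> simp [size]

def dual {A : Type} : Session A → Session A
  | .out a s  => .inp a (dual s)
  | .inp a s  => .out a (dual s)
  | .mu s     => .mu (dual (flip 0 s))
  | .var n    => .dvar n
  | .dvar n   => .var n
  | .done     => .done
  termination_by s => s.size
  decreasing_by all_goals simp [size, size_flip] <;> omega

end Session

namespace Session

theorem flip_flip {A : Type} (n : ℕ) (s : Session A) : flip n (flip n s) = s := by
  induction s generalizing n with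
  | out a t ih => simp [flip, ih]
  | inp a t ih => simp [flip, ih]
  | mu t ih => simp [flip, ih]
  | var m => by_cases hm : m = n <;> simp [flip, hm]
  | dvar m => by_cases hm : m = n <;> simp [flip, hm]
  | done => rfl

theorem flip_comm {A : Type} (m n : ℕ) (h : m ≠ n) (s : Session A) :
    flip m (flip n s) = flip n (flip m s) := by
  induction s generalizing m n with
  | out a t ih => simp [flip, ih m n h]
  | inp a t ih => simp [flip, ih m n h]
  | mu t ih => simp [flip, ih (m+1) (n+1) (by omega)]
  | var k =>
    by_cases hk : k = n <;> by_cases hk' : k = m <;>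
      simp_all [flip]
  | dvar k =>
    by_cases hk : k = n <;> by_cases hk' : k = m <;>
      simp_all [flip]
  | done => rfl

theorem dual_flip {A : Type} (n : ℕ) (s : Session A) :
    dual (flip n s) = flip n (dual s) := by
  have H : ∀ k (s : Session A), s.size = k → ∀ n, dual (flip n s) = flip n (dual s) := by
    intro k
    induction k using Nat.strong_induction_on with
    | _ k ih =>
      intro s hs n
      cases s with
      | out a t =>
        simp only [flip, dual]
        exact congrArg _ (ih t.size (by simp [size, ← hs]) t rfl n)
      | inp a t =>
        simp only [flip, dual]
        exact congrArg _ (ih t.size (by simp [size, ← hs]) t rfl n)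
      | mu t =>
        simp only [flip, dual]
        rw [ih (flip (n+1) t).size (by simp [size_flip, size, ← hs]) _ rfl 0,
          ih t.size (by simp [size, ← hs]) t rfl (n+1),
          ih t.size (by simp [size, ← hs]) t rfl 0,
          flip_comm 0 (n+1) (by omega)]
      | var m => by_cases hm : m = n <;> simp [flip, dual, hm]
      | dvar m => by_cases hm : m = n <;> simp [flip, dual, hm]
      | done => simp [flip, dual]
  exact H s.size s rfl n

end Session

/-- Duality of session types is an involution: for every session type `S`,
    the dual of the dual of `S` equals `S`. -/
theorem dual_dual_eq_self {A : Type} (S : Session A) : S.dual.dual = S := by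
  have H : ∀ k (S : Session A), S.size = k → S.dual.dual = S := by
    intro k
    induction k using Nat.strong_induction_on with
    | _ k ih =>
      intro S hs
      cases S with
      | out a t =>
        simp only [Session.dual]
        exact congrArg _ (ih t.size (by simp [Session.size, ← hs]) t rfl)
      | inp a t =>
        simp only [Session.dual]
        exact congrArg _ (ih t.size (by simp [Session.size, ← hs]) t rfl)
      | mu t =>
        simp only [Session.dual]
        rw [← Session.dual_flip, Session.flip_flip]
        exact congrArg _ (ih t.size (by simp [Session.size, ← hs]) t rfl)
      | var m => simp [Session.dual]
      | dvar m => simp [Session.dual]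
      | done => simp [Session.dual]
  exact H S.size S rfl
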